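/- Let d be a power of 2 and d' = d + log₂ d. Fix a nonempty set R ⊆ {1,…,d}, values r_i ∈ R and signs β_i ∈ {−1,+1} for each i ∈ {1,…,d}, and define g : {0,1}^{d'} → ℝ by g(x) = Σ_{b ∈ {1,…,d'}∖R} x_b·3^b + β_i·x_{r_i}·3^{r_i}, where i is the index of the subcube C_i containing x. For each r ∈ R, let A_r^+ = {i ∈ {1,…,d} : r_i = r and β_i = +1} and A_r^- = {i ∈ {1,…,d} : r_i = r and β_i = −1}. If min(|A_r^+|, |A_r^-|) ≥ (|A_r^+| + |A_r^-|)/4 for every r ∈ R, then g is 1/8-far from unate: every unate h : {0,1}^{d'} → ℝ satisfies |{x ∈ {0,1}^{d'} : h(x) ≠ g(x)}| ≥ 2^{d'}/8. -/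
import Mathlib


open Finset

/-- The index (in `{0, …, d-1}`, corresponding to the paper's `{1, …, d}`) of the subcube
containing `x ∈ {0,1}^{d+p}`, determined by the top `p` coordinates:
`∑_{t=1}^{p} x_{d+t} · 2^{t-1}`. -/
def subcubeIdx (d p : ℕ) (x : Fin (d + p) → Bool) : ℕ :=
  ∑ t : Fin p, if x ⟨d + t.1, Nat.add_lt_add_left t.2 d⟩ then 2 ^ t.1 else 0

/-- A function on the hypercube `{0,1}^m` is unate if it is `b`-monotone for some
`b ∈ {0,1}^m`: nondecreasing in every coordinate `j` with `b_j = 0` and nonincreasing in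
every coordinate `j` with `b_j = 1`. -/
def IsUnate {m : ℕ} (h : (Fin m → Bool) → ℝ) : Prop :=
  ∃ σ : Fin m → Bool, ∀ j : Fin m, ∀ x : Fin m → Bool,
    if σ j then h (Function.update x j true) ≤ h (Function.update x j false)
    else h (Function.update x j false) ≤ h (Function.update x j true)

/-- The `Yes`-distribution function: `f(x) = ∑_{b ∉ R} x_b 3^b + α_{r_i} x_{r_i} 3^{r_i}`
on the subcube `C_i` containing `x`.  (Lean coordinate `b : Fin (d+p)` stands for the
paper's coordinate `b + 1`, with weight `3^(b+1)`.) -/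
noncomputable def fYes (d p : ℕ) (R : Finset (Fin (d + p))) (r : ℕ → Fin (d + p))
    (α : Fin (d + p) → ℝ) (x : Fin (d + p) → Bool) : ℝ :=
  (∑ b ∈ Finset.univ \ R, if x b then (3 : ℝ) ^ ((b : ℕ) + 1) else 0) +
    α (r (subcubeIdx d p x)) *
      (if x (r (subcubeIdx d p x)) then (3 : ℝ) ^ (((r (subcubeIdx d p x)) : ℕ) + 1) else 0)

/-- The `No`-distribution function: `g(x) = ∑_{b ∉ R} x_b 3^b + β_i x_{r_i} 3^{r_i}`
on the subcube `C_i` containing `x`. -/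
noncomputable def gNo (d p : ℕ) (R : Finset (Fin (d + p))) (r : ℕ → Fin (d + p))
    (β : ℕ → ℝ) (x : Fin (d + p) → Bool) : ℝ :=
  (∑ b ∈ Finset.univ \ R, if x b then (3 : ℝ) ^ ((b : ℕ) + 1) else 0) +
    β (subcubeIdx d p x) *
      (if x (r (subcubeIdx d p x)) then (3 : ℝ) ^ (((r (subcubeIdx d p x)) : ℕ) + 1) else 0)

open scoped Classical

private lemma bitsum (p : ℕ) :
    ∀ i < 2 ^ p, (∑ t ∈ Finset.range p, if Nat.testBit i t then 2 ^ t else 0) = i := by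
  induction p with
  | zero =>
    intro i hi
    interval_cases i
    simp
  | succ p ih =>
    intro i hi
    rw [Finset.sum_range_succ']
    have h2 : i / 2 < 2 ^ p := by
      have h3 : 2 ^ (p + 1) = 2 * 2 ^ p := by ring
      omega
    have e1 : (∑ t ∈ Finset.range p, if Nat.testBit i (t + 1) then 2 ^ (t + 1) else 0)
        = 2 * ∑ t ∈ Finset.range p, if Nat.testBit (i / 2) t then 2 ^ t else 0 := by
      rw [Finset.mul_sum]
      refine Finset.sum_congr rfl fun t _ => ?_
      rw [Nat.testBit_add_one]
      split <;> ring
    rw [e1, ih _ h2]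
    rcases Nat.mod_two_eq_zero_or_one i with hm | hm
    · have hb : Nat.testBit i 0 = false := by simp [Nat.testBit_zero, hm]
      rw [hb]
      simp
      omega
    · have hb : Nat.testBit i 0 = true := by simp [Nat.testBit_zero, hm]
      rw [hb]
      simp
      omega

private def embed (d p : ℕ) (y : Fin d → Bool) (i : ℕ) : Fin (d + p) → Bool :=
  fun j => if h : (j : ℕ) < d then y ⟨j, h⟩ else Nat.testBit i ((j : ℕ) - d)

private lemma subcubeIdx_update (d p : ℕ) (x : Fin (d + p) → Bool) (j : Fin (d + p))
    (hj : (j : ℕ) < d) (v : Bool) :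
    subcubeIdx d p (Function.update x j v) = subcubeIdx d p x := by
  unfold subcubeIdx
  refine Finset.sum_congr rfl fun t _ => ?_
  have hne : (⟨d + t.1, Nat.add_lt_add_left t.2 d⟩ : Fin (d + p)) ≠ j := by
    intro he
    have h2 := congrArg Fin.val he
    simp at h2
    omega
  rw [Function.update_of_ne hne]

private lemma subcubeIdx_embed (d p : ℕ) (y : Fin d → Bool) (i : ℕ) (hi : i < 2 ^ p) :
    subcubeIdx d p (embed d p y i) = i := by
  unfold subcubeIdx
  have e1 : ∀ t : Fin p,
      embed d p y i ⟨d + t.1, Nat.add_lt_add_left t.2 d⟩ = Nat.testBit i t.1 := by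
    intro t
    simp only [embed]
    rw [dif_neg (by omega)]
    congr 1
    omega
  calc (∑ t : Fin p, if embed d p y i ⟨d + t.1, Nat.add_lt_add_left t.2 d⟩ then 2 ^ t.1 else 0)
      = ∑ t : Fin p, if Nat.testBit i t.1 then 2 ^ t.1 else 0 :=
        Finset.sum_congr rfl fun t _ => by rw [e1 t]
    _ = ∑ t ∈ Finset.range p, if Nat.testBit i t then 2 ^ t else 0 :=
        Fin.sum_univ_eq_sum_range (fun t => if Nat.testBit i t then 2 ^ t else 0) p
    _ = i := bitsum p i hi

private noncomputable def psi (d p : ℕ) (r : ℕ → Fin (d + p))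
    (h g : (Fin (d + p) → Bool) → ℝ) (q : (Fin d → Bool) × ℕ) : Fin (d + p) → Bool :=
  if h (Function.update (embed d p q.1 q.2) (r q.2) false)
      ≠ g (Function.update (embed d p q.1 q.2) (r q.2) false)
  then Function.update (embed d p q.1 q.2) (r q.2) false
  else Function.update (embed d p q.1 q.2) (r q.2) true

private lemma psi_spec (d p : ℕ) (r : ℕ → Fin (d + p))
    (h g : (Fin (d + p) → Bool) → ℝ) (q : (Fin d → Bool) × ℕ) :
    ∃ v, psi d p r h g q = Function.update (embed d p q.1 q.2) (r q.2) v := by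
  unfold psi
  split
  · exact ⟨false, rfl⟩
  · exact ⟨true, rfl⟩

/-- If for every `r ∈ R` the subcubes with action dimension `r` are split between the two
signs `β = ±1` in ratio at least `1/4`, then the `No`-distribution function `g` is
`1/8`-far from unate. -/
theorem stmt8 (p d : ℕ) (hd : d = 2 ^ p)
    (R : Finset (Fin (d + p))) (hRne : R.Nonempty) (hRd : ∀ b ∈ R, (b : ℕ) < d)
    (r : ℕ → Fin (d + p)) (hr : ∀ i < d, r i ∈ R)
    (β : ℕ → ℝ) (hβ : ∀ i, β i = 1 ∨ β i = -1)
    (g : (Fin (d + p) → Bool) → ℝ) (hg : ∀ x, g x = gNo d p R r β x)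
    (hbal : ∀ rr ∈ R,
      ((((Finset.range d).filter fun i => r i = rr ∧ β i = 1).card +
        (((Finset.range d).filter fun i => r i = rr ∧ β i = -1)).card : ℝ)) / 4 ≤
      min ((((Finset.range d).filter fun i => r i = rr ∧ β i = 1).card : ℝ))
          ((((Finset.range d).filter fun i => r i = rr ∧ β i = -1).card : ℝ))) :
    ∀ h : (Fin (d + p) → Bool) → ℝ, IsUnate h →
      (2 : ℝ) ^ (d + p) / 8 ≤ (Set.ncard {x : Fin (d + p) → Bool | h x ≠ g x} : ℝ) := by
  intro h hU
  obtain ⟨σ, hσ⟩ := hU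
  classical
  set Bad : Finset ℕ :=
    (Finset.range d).filter (fun i => if σ (r i) then β i = (1 : ℝ) else β i = -1) with hBadDef
  set D : Finset (Fin (d + p) → Bool) := Finset.univ.filter (fun x => h x ≠ g x) with hDdef
  have hset : {x : Fin (d + p) → Bool | h x ≠ g x} = ↑D := by
    ext x
    simp [hDdef]
  rw [hset, Set.ncard_coe_finset]
  have hrd : ∀ i, i < d → ((r i : ℕ)) < d := fun i hi => hRd _ (hr i hi)
  have hBadlt : ∀ i ∈ Bad, i < d := by
    intro i hi
    rw [hBadDef] at hi
    exact Finset.mem_range.mp (Finset.mem_filter.mp hi).1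
  have hBadsign : ∀ i ∈ Bad, (if σ (r i) then β i = (1 : ℝ) else β i = -1) := by
    intro i hi
    rw [hBadDef] at hi
    exact (Finset.mem_filter.mp hi).2
  -- key disagreement lemma: for a bad subcube, every edge in direction `r i` has a
  -- disagreement endpoint
  have key : ∀ (y : Fin d → Bool) (i : ℕ), i ∈ Bad →
      h (Function.update (embed d p y i) (r i) false)
        ≠ g (Function.update (embed d p y i) (r i) false) ∨
      h (Function.update (embed d p y i) (r i) true)
        ≠ g (Function.update (embed d p y i) (r i) true) := by
    intro y i hi
    by_contra hcon
    push_neg at hcon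
    obtain ⟨h0, h1⟩ := hcon
    have hid : i < d := hBadlt i hi
    have hip : i < 2 ^ p := hd ▸ hid
    set e := embed d p y i with he
    set u0 := Function.update e (r i) false with hu0
    set u1 := Function.update e (r i) true with hu1
    have sc0 : subcubeIdx d p u0 = i := by
      rw [hu0, subcubeIdx_update d p e (r i) (hrd i hid) false, he,
        subcubeIdx_embed d p y i hip]
    have sc1 : subcubeIdx d p u1 = i := by
      rw [hu1, subcubeIdx_update d p e (r i) (hrd i hid) true, he,
        subcubeIdx_embed d p y i hip]
    set S : ℝ := ∑ b ∈ Finset.univ \ R, if e b then (3 : ℝ) ^ ((b : ℕ) + 1) else 0 with hSdef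
    have hS : ∀ (u : Fin (d + p) → Bool), (∀ b, b ≠ r i → u b = e b) →
        (∑ b ∈ Finset.univ \ R, if u b then (3 : ℝ) ^ ((b : ℕ) + 1) else 0) = S := by
      intro u hu
      refine Finset.sum_congr rfl fun b hb => ?_
      have hbne : b ≠ r i := fun hbe => (Finset.mem_sdiff.mp hb).2 (hbe ▸ hr i hid)
      rw [hu b hbne]
    have g0 : g u0 = S := by
      rw [hg u0]
      simp only [gNo]
      rw [sc0, hS u0 (fun b hb => by rw [hu0]; exact Function.update_of_ne hb false e)]
      have hv : u0 (r i) = false := by rw [hu0]; exact Function.update_self (r i) false e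
      rw [hv]
      simp
    have g1 : g u1 = S + β i * (3 : ℝ) ^ (((r i : ℕ)) + 1) := by
      rw [hg u1]
      simp only [gNo]
      rw [sc1, hS u1 (fun b hb => by rw [hu1]; exact Function.update_of_ne hb true e)]
      have hv : u1 (r i) = true := by rw [hu1]; exact Function.update_self (r i) true e
      rw [hv]
      simp
    have hpow : (0 : ℝ) < (3 : ℝ) ^ (((r i : ℕ)) + 1) := by positivity
    have hmono := hσ (r i) e
    have hsign := hBadsign i hi
    by_cases hs : σ (r i)
    · rw [if_pos hs] at hmono hsign
      rw [← hu0, ← hu1] at hmono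
      rw [h0, h1, g0, g1, hsign] at hmono
      linarith
    · rw [if_neg hs] at hmono hsign
      rw [← hu0, ← hu1] at hmono
      rw [h0, h1, g0, g1, hsign] at hmono
      linarith
  -- psi maps into D
  have hψD : ∀ q : (Fin d → Bool) × ℕ, q.2 ∈ Bad → psi d p r h g q ∈ D := by
    intro q hq
    rw [hDdef, Finset.mem_filter]
    refine ⟨Finset.mem_univ _, ?_⟩
    unfold psi
    split
    · assumption
    · rcases key q.1 q.2 hq with hk | hk
      · exact absurd hk (by assumption)
      · exact hk
  have hψidx : ∀ q : (Fin d → Bool) × ℕ, q.2 < d →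
      subcubeIdx d p (psi d p r h g q) = q.2 := by
    intro q hq
    obtain ⟨v, hv⟩ := psi_spec d p r h g q
    rw [hv, subcubeIdx_update d p _ (r q.2) (hrd q.2 hq) v,
      subcubeIdx_embed d p q.1 q.2 (hd ▸ hq)]
  -- fibers of psi have size at most 2
  have hfiber : ∀ a ∈ D,
      ((Finset.univ ×ˢ Bad).filter (fun q => psi d p r h g q = a)).card ≤ 2 := by
    intro a _
    set ia := subcubeIdx d p a with hia
    have hsub : ((Finset.univ ×ˢ Bad).filter (fun q => psi d p r h g q = a)) ⊆
        {((fun j : Fin d => if (j : ℕ) = ((r ia : ℕ)) then false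
            else a ⟨j.1, lt_of_lt_of_le j.2 (Nat.le_add_right d p)⟩), ia),
         ((fun j : Fin d => if (j : ℕ) = ((r ia : ℕ)) then true
            else a ⟨j.1, lt_of_lt_of_le j.2 (Nat.le_add_right d p)⟩), ia)} := by
      intro q hq
      obtain ⟨hqmem, hqa⟩ := Finset.mem_filter.mp hq
      have hiBad : q.2 ∈ Bad := (Finset.mem_product.mp hqmem).2
      have hqd : q.2 < d := hBadlt _ hiBad
      have hiaq : ia = q.2 := by rw [hia, ← hqa, hψidx q hqd]
      obtain ⟨v, hv⟩ := psi_spec d p r h g q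
      have hva : Function.update (embed d p q.1 q.2) (r q.2) v = a := by rw [← hv, hqa]
      have hcoord : ∀ j : Fin d, (j : ℕ) ≠ ((r q.2 : ℕ)) →
          q.1 j = a ⟨j.1, lt_of_lt_of_le j.2 (Nat.le_add_right d p)⟩ := by
        intro j hj
        rw [← hva]
        have hne : (⟨j.1, lt_of_lt_of_le j.2 (Nat.le_add_right d p)⟩ : Fin (d + p)) ≠ r q.2 := by
          intro hEq
          exact hj (congrArg Fin.val hEq)
        rw [Function.update_of_ne hne]
        simp only [embed]
        rw [dif_pos j.2]
      rw [hiaq]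
      simp only [Finset.mem_insert, Finset.mem_singleton, Prod.ext_iff]
      rcases Bool.eq_false_or_eq_true (q.1 ⟨(r q.2 : ℕ), hrd q.2 hqd⟩) with hb | hb
      · right
        refine ⟨funext fun j => ?_, trivial⟩
        by_cases hc : (j : ℕ) = ((r q.2 : ℕ))
        · rw [if_pos hc]
          have : j = (⟨(r q.2 : ℕ), hrd q.2 hqd⟩ : Fin d) := Fin.ext hc
          rw [this, hb]
        · rw [if_neg hc]
          exact hcoord j hc
      · left
        refine ⟨funext fun j => ?_, trivial⟩
        by_cases hc : (j : ℕ) = ((r q.2 : ℕ))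
        · rw [if_pos hc]
          have : j = (⟨(r q.2 : ℕ), hrd q.2 hqd⟩ : Fin d) := Fin.ext hc
          rw [this, hb]
        · rw [if_neg hc]
          exact hcoord j hc
    refine le_trans (Finset.card_le_card hsub) (le_trans (Finset.card_insert_le _ _) ?_)
    simp
  -- counting
  have himage : ∀ q ∈ (Finset.univ ×ˢ Bad : Finset ((Fin d → Bool) × ℕ)),
      psi d p r h g q ∈ D := fun q hq => hψD q (Finset.mem_product.mp hq).2
  have hcount : (Finset.univ ×ˢ Bad : Finset ((Fin d → Bool) × ℕ)).card ≤ 2 * D.card :=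
    Finset.card_le_mul_card_image_of_maps_to himage 2 hfiber
  have hprod : (Finset.univ ×ˢ Bad : Finset ((Fin d → Bool) × ℕ)).card = 2 ^ d * Bad.card := by
    rw [Finset.card_product, Finset.card_univ]
    congr 1
    simp
  -- lower bound on Bad.card
  have hdsum : (Finset.range d).card = ∑ rr ∈ R, ((Finset.range d).filter (fun i => r i = rr)).card :=
    Finset.card_eq_sum_card_fiberwise (fun i hi => hr i (Finset.mem_range.mp hi))
  have hBadsum : Bad.card = ∑ rr ∈ R, (Bad.filter (fun i => r i = rr)).card :=
    Finset.card_eq_sum_card_fiberwise (fun i hi => hr i (hBadlt i hi))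
  have hkey2 : ∀ rr ∈ R, (((Finset.range d).filter (fun i => r i = rr)).card : ℝ) ≤
      4 * ((Bad.filter (fun i => r i = rr)).card : ℝ) := by
    intro rr hrr
    have hsplit : ((Finset.range d).filter (fun i => r i = rr)).card =
        ((Finset.range d).filter (fun i => r i = rr ∧ β i = 1)).card +
        ((Finset.range d).filter (fun i => r i = rr ∧ β i = -1)).card := by
      rw [← Finset.card_union_of_disjoint]
      · congr 1
        rw [← Finset.filter_or]
        apply Finset.filter_congr
        intro i _
        rcases hβ i with h1 | h1 <;> simp [h1] <;> tauto
      · rw [Finset.disjoint_left]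
        intro i hi1 hi2
        have e1 := (Finset.mem_filter.mp hi1).2.2
        have e2 := (Finset.mem_filter.mp hi2).2.2
        rw [e1] at e2
        norm_num at e2
    have hBadrr : (Bad.filter (fun i => r i = rr)) =
        (if σ rr then ((Finset.range d).filter (fun i => r i = rr ∧ β i = 1))
         else ((Finset.range d).filter (fun i => r i = rr ∧ β i = -1))) := by
      rw [hBadDef, Finset.filter_filter]
      by_cases hs : σ rr
      · rw [if_pos hs]
        ext i
        simp only [Finset.mem_filter, Finset.mem_range]
        constructor
        · rintro ⟨hlt, hcond, hreq⟩
          rw [hreq, if_pos hs] at hcond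
          exact ⟨hlt, hreq, hcond⟩
        · rintro ⟨hlt, hreq, hbeta⟩
          refine ⟨hlt, ?_, hreq⟩
          rw [hreq, if_pos hs]
          exact hbeta
      · rw [if_neg hs]
        ext i
        simp only [Finset.mem_filter, Finset.mem_range]
        constructor
        · rintro ⟨hlt, hcond, hreq⟩
          rw [hreq, if_neg hs] at hcond
          exact ⟨hlt, hreq, hcond⟩
        · rintro ⟨hlt, hreq, hbeta⟩
          refine ⟨hlt, ?_, hreq⟩
          rw [hreq, if_neg hs]
          exact hbeta
    have hb := hbal rr hrr
    rw [hsplit, hBadrr]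
    by_cases hs : σ rr
    · rw [if_pos hs]
      have h1 := le_trans hb (min_le_left _ _)
      push_cast
      linarith
    · rw [if_neg hs]
      have h1 := le_trans hb (min_le_right _ _)
      push_cast
      linarith
  have hbad4 : (d : ℝ) ≤ 4 * (Bad.card : ℝ) := by
    have h0 := hdsum
    rw [Finset.card_range] at h0
    have h1 : (d : ℝ) = ∑ rr ∈ R, (((Finset.range d).filter (fun i => r i = rr)).card : ℝ) := by
      exact_mod_cast h0
    have h2 : (Bad.card : ℝ) = ∑ rr ∈ R, ((Bad.filter (fun i => r i = rr)).card : ℝ) := by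
      exact_mod_cast hBadsum
    rw [h1, h2, Finset.mul_sum]
    exact Finset.sum_le_sum hkey2
  -- final arithmetic
  have hA : ((2 : ℝ) ^ d) * (Bad.card : ℝ) ≤ 2 * (D.card : ℝ) := by
    have h3 := hcount
    rw [hprod] at h3
    exact_mod_cast h3
  have h2p : ((d : ℝ)) = 2 ^ p := by rw [hd]; push_cast; ring
  have hpw : (2 : ℝ) ^ (d + p) = 2 ^ d * (d : ℝ) := by rw [pow_add, h2p]
  rw [hpw]
  have h2dpos : (0 : ℝ) < 2 ^ d := by positivity
  nlinarith [mul_le_mul_of_nonneg_left hbad4 (le_of_lt h2dpos)]
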